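/- arXiv:math/9203203 — 2 statements merged into one kernel-verified Lean document; each statement's English description precedes it below -/
import Mathlib

section
/- Let h : ℝ → ℝ be a homeomorphism and define S : ℝ × ℝ → ℝ by S(t,y) = h(h⁻¹(y) + t). If the partial derivative ∂S/∂y exists everywhere and is continuous as a function of (t,y), then h is a C¹ diffeomorphism of ℝ. -/
/-!
Average the flow over one unit of time: `G y = ∫ t in 0..1, S (t, y)`. Differentiating under the
integral sign, `G` is differentiable with continuous derivative `g y = ∫ t in 0..1, S' (t, y)`,
which is positive because `S' (0, ·) = 1` and `S'` never vanishes (`S (-t, ·)` inverts `S (t, ·)`).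
On the other hand `G (h x) = ∫ u in x..x + 1, h u` has derivative `h (x + 1) - h x ≠ 0`.
Dividing, `h` has the continuous nonvanishing derivative `(h (x + 1) - h x) / g (h x)`, and the
inverse function theorem in dimension one gives the differentiability of `h⁻¹`.
-/

open Set Filter Topology MeasureTheory

theorem Continuous.hasDerivAt_integral_add_const {E : Type*} [NormedAddCommGroup E]
    [NormedSpace ℝ E] [CompleteSpace E] {f : ℝ → E} (hf : Continuous f) (c x : ℝ) :
    HasDerivAt (fun x => ∫ u in x..x + c, f u) (f (x + c) - f x) x := by
  have hsub : (fun x => ∫ u in x..x + c, f u) =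
      fun x => (∫ u in (0 : ℝ)..x + c, f u) - ∫ u in (0 : ℝ)..x, f u := by
    funext x
    exact (intervalIntegral.integral_interval_sub_left (hf.intervalIntegrable _ _)
      (hf.intervalIntegrable _ _)).symm
  rw [hsub]
  exact ((hf.integral_hasStrictDerivAt 0 (x + c)).hasDerivAt.comp_add_const x c).sub
    (hf.integral_hasStrictDerivAt 0 x).hasDerivAt

theorem hasDerivAt_intervalIntegral_of_continuous_partialDeriv {E : Type*}
    [NormedAddCommGroup E] [NormedSpace ℝ E] [CompleteSpace E] {F F' : ℝ × ℝ → E} {a b : ℝ}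
    (hF : ∀ y, Continuous fun t => F (t, y)) (hF' : Continuous F')
    (hderiv : ∀ t y, HasDerivAt (fun y' => F (t, y')) (F' (t, y)) y) (y : ℝ) :
    HasDerivAt (fun y => ∫ t in a..b, F (t, y)) (∫ t in a..b, F' (t, y)) y := by
  obtain ⟨C, hC⟩ : ∃ C, ∀ p ∈ uIcc a b ×ˢ Metric.closedBall y 1, ‖F' p‖ ≤ C :=
    (isCompact_uIcc.prod (isCompact_closedBall y 1)).exists_bound_of_continuousOn
      hF'.continuousOn
  refine (intervalIntegral.hasDerivAt_integral_of_dominated_loc_of_deriv_le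
    (F := fun y t => F (t, y)) (F' := fun y t => F' (t, y)) (bound := fun _ => C)
    (Metric.closedBall_mem_nhds y one_pos)
    (Eventually.of_forall fun y => (hF y).aestronglyMeasurable)
    ((hF y).intervalIntegrable a b)
    (hF'.comp (by fun_prop)).aestronglyMeasurable ?_ intervalIntegrable_const
    (Eventually.of_forall fun t _ y _ => hderiv t y)).2
  exact Eventually.of_forall fun t ht y' hy' =>
    hC (t, y') ⟨uIoc_subset_uIcc ht, hy'⟩

section ConjugateTranslation

variable {h : ℝ ≃ₜ ℝ} {S S' : ℝ × ℝ → ℝ}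

theorem conjTranslation_partialDeriv_zero (hS : ∀ t y, S (t, y) = h (h.symm y + t))
    (hderiv : ∀ t y, HasDerivAt (fun y' => S (t, y')) (S' (t, y)) y) (y : ℝ) :
    S' (0, y) = 1 := by
  have hid : (fun y' => S (0, y')) = id := by
    funext y'
    simp [hS]
  exact (hid ▸ hderiv 0 y).unique (hasDerivAt_id y)

theorem conjTranslation_partialDeriv_ne_zero (hS : ∀ t y, S (t, y) = h (h.symm y + t))
    (hderiv : ∀ t y, HasDerivAt (fun y' => S (t, y')) (S' (t, y)) y) (p : ℝ × ℝ) :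
    S' p ≠ 0 := by
  obtain ⟨t, y⟩ := p
  have hinv : (fun y' => S (-t, y')) ∘ (fun y' => S (t, y')) = id := by
    funext y'
    simp [hS]
  have hchain := (hderiv (-t) (S (t, y))).comp y (hderiv t y)
  rw [hinv] at hchain
  exact right_ne_zero_of_mul_eq_one (hchain.unique (hasDerivAt_id y))

theorem conjTranslation_partialDeriv_pos (hS : ∀ t y, S (t, y) = h (h.symm y + t))
    (hderiv : ∀ t y, HasDerivAt (fun y' => S (t, y')) (S' (t, y)) y) (hcont : Continuous S')
    (p : ℝ × ℝ) : 0 < S' p := by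
  by_contra! hp
  have h0 : (0 : ℝ) ∈ Icc (S' p) (S' (0, 0)) :=
    ⟨hp, (conjTranslation_partialDeriv_zero hS hderiv 0).symm ▸ zero_le_one⟩
  obtain ⟨q, hq⟩ := intermediate_value_univ p (0, 0) hcont h0
  exact conjTranslation_partialDeriv_ne_zero hS hderiv q hq

end ConjugateTranslation

theorem translation_conjugacy_rigidity
    (h : Homeomorph ℝ ℝ) (S S' : ℝ × ℝ → ℝ)
    (hS : ∀ t y, S (t, y) = h (h.symm y + t))
    (hderiv : ∀ t y, HasDerivAt (fun y' => S (t, y')) (S' (t, y)) y)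
    (hcont : Continuous S') :
    ContDiff ℝ 1 (h : ℝ → ℝ) ∧ (∀ x, deriv (h : ℝ → ℝ) x ≠ 0) ∧
      Differentiable ℝ (h.symm : ℝ → ℝ) := by
  set G : ℝ → ℝ := fun y => ∫ t in (0 : ℝ)..1, S (t, y)
  set g : ℝ → ℝ := fun y => ∫ t in (0 : ℝ)..1, S' (t, y)
  have hSc : Continuous S := by
    rw [show S = fun p => h (h.symm p.2 + p.1) from funext fun p => hS p.1 p.2]
    fun_prop
  have hG (y : ℝ) : HasDerivAt G (g y) y :=
    hasDerivAt_intervalIntegral_of_continuous_partialDeriv (fun y => hSc.comp (by fun_prop))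
      hcont hderiv y
  have hg_pos (y : ℝ) : 0 < g y :=
    intervalIntegral.intervalIntegral_pos_of_pos ((hcont.comp (by fun_prop)).intervalIntegrable 0 1)
      (fun t => conjTranslation_partialDeriv_pos hS hderiv hcont (t, y)) one_pos
  have hg_cont : Continuous g :=
    intervalIntegral.continuous_parametric_intervalIntegral_of_continuous'
      (f := fun y t => S' (t, y)) (hcont.comp continuous_swap) 0 1
  have hstep_ne (x : ℝ) : h (x + 1) - h x ≠ 0 :=
    sub_ne_zero.mpr fun hx => by simpa using h.injective hx
  have hGh (x : ℝ) : G (h x) = ∫ u in x..x + 1, h u := by simp [G, hS]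
  have hh (x : ℝ) : HasDerivAt h ((h (x + 1) - h x) / g (h x)) x :=
    .of_comp_left h.continuous.continuousAt (hG (h x))
      (h.continuous.hasDerivAt_integral_add_const 1 x) (hg_pos _).ne'
      (Eventually.of_forall hGh)
  have hderiv_h : deriv h = fun x => (h (x + 1) - h x) / g (h x) := funext fun x => (hh x).deriv
  have hh_ne (x : ℝ) : (h (x + 1) - h x) / g (h x) ≠ 0 := div_ne_zero (hstep_ne x) (hg_pos _).ne'
  refine ⟨contDiff_one_iff_deriv.mpr ⟨fun x => (hh x).differentiableAt, ?_⟩, ?_, fun y => ?_⟩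
  · rw [hderiv_h]
    exact (by fun_prop : Continuous fun x => h (x + 1) - h x).div (hg_cont.comp h.continuous)
      fun x => (hg_pos _).ne'
  · simpa only [hderiv_h] using hh_ne
  · exact (HasDerivAt.of_local_left_inverse h.symm.continuous.continuousAt
      (hh (h.symm y)) (hh_ne _) (Eventually.of_forall h.apply_symm_apply)).differentiableAt
end

section
/- Let A ∈ SL(2,ℤ) be hyperbolic with unstable eigenvector vᵘ and stable eigenvector vˢ. For z ∈ ℝ²/ℤ², define the stable leaf Wˢ(z) = {z + π(s·vˢ) : s ∈ ℝ} and unstable leaf Wᵘ(z) = {z + π(s·vᵘ) : s ∈ ℝ}, where π : ℝ² → ℝ²/ℤ² is the projection. Then for every z, the homoclinic set Wˢ(z) ∩ Wᵘ(z) is dense in ℝ²/ℤ². -/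
/-- The coordinatewise cast `(Fin 2 → ℤ) →+ (Fin 2 → ℝ)`. -/
def intCast2 : (Fin 2 → ℤ) →+ (Fin 2 → ℝ) where
  toFun w := fun i => (w i : ℝ)
  map_zero' := by funext i; simp
  map_add' x y := by funext i; push_cast; simp

/-- The integer lattice `ℤ² ⊂ ℝ²`. -/
def lattice2 : AddSubgroup (Fin 2 → ℝ) := intCast2.range

/-- The torus `T² = ℝ²/ℤ²`. -/
abbrev Torus2 : Type := (Fin 2 → ℝ) ⧸ lattice2

/-- The projection `π : ℝ² → ℝ²/ℤ²`. -/
abbrev torusProj : (Fin 2 → ℝ) → Torus2 := QuotientAddGroup.mk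


/-!
In the eigenbasis `(vs, vu)` write `α, β` for the coordinates. For lattice points `n, m` the point
`x = α n • vs + β m • vu` satisfies `x - m ∈ ℝ vs` and `x - n ∈ ℝ vu`, so `z + π x` lies on both
leaves through `z`. Such points are dense because `α(ℤ²)` and `β(ℤ²)` are dense in `ℝ`: each is a
nonzero subgroup stable under multiplication by `l⁻¹` (through `A` for `α`, through the integer
matrix `A⁻¹ = adj A` for `β`), hence has arbitrarily small positive elements.
-/

open Module Matrix

section ArchimedeanField

variable {K : Type*} [Field K] [LinearOrder K] [IsStrictOrderedRing K] [Archimedean K]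
  [TopologicalSpace K] [OrderTopology K]

theorem AddSubgroup.dense_of_mul_mem {G : AddSubgroup K} {c : K} (hc0 : c ≠ 0) (hc1 : |c| < 1)
    (hG : ∀ x ∈ G, c * x ∈ G) {g : K} (hg : g ∈ G) (hg0 : g ≠ 0) : Dense (G : Set K) := by
  have hpow : ∀ k : ℕ, c ^ k * g ∈ G := fun k => by
    induction k with
    | zero => simpa using hg
    | succ k ih => simpa [pow_succ', mul_assoc] using hG _ ih
  refine G.dense_of_not_isolated_zero fun ε hε => ?_
  obtain ⟨k, hk⟩ := exists_pow_lt_of_lt_one (div_pos hε (abs_pos.2 hg0)) hc1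
  refine ⟨|c ^ k * g|, abs_mem_iff.2 (hpow k), abs_pos.2 (by positivity), ?_⟩
  rw [abs_mul, abs_pow]
  exact (lt_div_iff₀ (abs_pos.2 hg0)).1 hk

end ArchimedeanField

namespace Module.Basis

variable {ι R M : Type*}

theorem coord_ne_zero [Semiring R] [Nontrivial R] [AddCommMonoid M] [Module R M]
    (b : Basis ι R M) (i : ι) : b.coord i ≠ 0 := fun h => by
  simpa using LinearMap.congr_fun h (b i)

theorem coord_apply_eq_mul_of_apply_eq_smul [CommSemiring R] [AddCommMonoid M] [Module R M]
    (b : Basis ι R M) {f : M →ₗ[R] M} {μ : ι → R} (hf : ∀ j, f (b j) = μ j • b j) (i : ι)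
    (x : M) : b.coord i (f x) = μ i * b.coord i x := by
  change ((b.coord i).comp f) x = (μ i • b.coord i) x
  congr 1
  refine b.ext fun j => ?_
  by_cases hij : i = j
  · subst hij; simp [hf]
  · simp [hf, hij]

theorem dense_setOf_forall_repr_mem {𝕜 V : Type*} [Finite ι] [NontriviallyNormedField 𝕜]
    [CompleteSpace 𝕜] [AddCommGroup V] [Module 𝕜 V] [TopologicalSpace V]
    [IsTopologicalAddGroup V] [ContinuousSMul 𝕜 V] [T2Space V] [FiniteDimensional 𝕜 V]
    (b : Basis ι 𝕜 V) {S : ι → Set 𝕜} (hS : ∀ i, Dense (S i)) :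
    Dense {x | ∀ i, b.repr x i ∈ S i} := by
  simpa [Set.preimage, Set.pi] using (dense_pi Set.univ fun i _ => hS i).preimage
    b.equivFun.toContinuousLinearEquiv.toHomeomorph.isOpenMap

end Module.Basis

theorem adjugate_map_mulVec_of_mulVec_eq_smul {n : Type*} [Fintype n] [DecidableEq n]
    {A : Matrix n n ℤ} (hdet : A.det = 1) {l : ℝ} (hl : l ≠ 0) {v : n → ℝ}
    (hv : A.map (Int.cast : ℤ → ℝ) *ᵥ v = l • v) :
    A.adjugate.map (Int.cast : ℤ → ℝ) *ᵥ v = l⁻¹ • v := by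
  have hinv : A.adjugate.map (Int.cast : ℤ → ℝ) * A.map Int.cast = 1 := by
    have h := (Matrix.map_mul (f := Int.castRingHom ℝ) (L := A.adjugate) (M := A)).symm
    rwa [adjugate_mul, hdet, one_smul, Matrix.map_one _ (map_zero _) (map_one _)] at h
  calc A.adjugate.map Int.cast *ᵥ v
      = l⁻¹ • (A.adjugate.map Int.cast *ᵥ (l • v)) := by
        rw [mulVec_smul, smul_smul, inv_mul_cancel₀ hl, one_smul]
    _ = l⁻¹ • v := by rw [← hv, mulVec_mulVec, hinv, one_mulVec]

theorem mulVec_mem_lattice2 (M : Matrix (Fin 2) (Fin 2) ℤ) {x : Fin 2 → ℝ} (hx : x ∈ lattice2) :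
    M.map (Int.cast : ℤ → ℝ) *ᵥ x ∈ lattice2 := by
  obtain ⟨n, rfl⟩ := hx
  exact ⟨M *ᵥ n, funext fun i => (Int.castRingHom ℝ).map_mulVec M n i⟩

theorem single_mem_lattice2 (i : Fin 2) : Pi.single i 1 ∈ lattice2 :=
  ⟨Pi.single i 1, funext fun j => by simp [intCast2, Pi.single_apply]⟩

theorem exists_mem_lattice2_apply_ne_zero {φ : (Fin 2 → ℝ) →ₗ[ℝ] ℝ} (hφ : φ ≠ 0) :
    ∃ x ∈ lattice2, φ x ≠ 0 := by
  by_contra! h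
  exact hφ ((Pi.basisFun ℝ (Fin 2)).ext fun i => by simpa using h _ (single_mem_lattice2 i))

theorem dense_image_lattice2 {φ : (Fin 2 → ℝ) →ₗ[ℝ] ℝ} (hφ : φ ≠ 0) (M : Matrix (Fin 2) (Fin 2) ℤ)
    {c : ℝ} (hc0 : c ≠ 0) (hc1 : |c| < 1)
    (hM : ∀ x, φ (M.map (Int.cast : ℤ → ℝ) *ᵥ x) = c * φ x) : Dense (φ '' lattice2) := by
  obtain ⟨x, hx, hx0⟩ := exists_mem_lattice2_apply_ne_zero hφ
  have hG : ∀ y ∈ lattice2.map φ.toAddMonoidHom, c * y ∈ lattice2.map φ.toAddMonoidHom := by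
    rintro _ ⟨y, hy, rfl⟩
    exact ⟨_, mulVec_mem_lattice2 M hy, hM y⟩
  simpa using AddSubgroup.dense_of_mul_mem hc0 hc1 hG ⟨x, hx, rfl⟩ hx0

def torusLeaf (z : Torus2) (v : Fin 2 → ℝ) : Set Torus2 :=
  {w | ∃ s : ℝ, w = z + torusProj (s • v)}

theorem add_torusProj_mem_torusLeaf (b : Basis (Fin 2) ℝ (Fin 2 → ℝ)) (z : Torus2)
    {x m : Fin 2 → ℝ} (hm : m ∈ lattice2) {i j : Fin 2} (hij : i ≠ j)
    (hx : b.coord j x = b.coord j m) : z + torusProj x ∈ torusLeaf z (b i) := by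
  refine ⟨b.coord i (x - m), congrArg (z + ·) (QuotientAddGroup.eq_iff_sub_mem.2 ?_)⟩
  convert hm using 1
  rw [sub_eq_iff_eq_add', ← sub_eq_iff_eq_add, b.ext_elem_iff]
  intro k
  by_cases hk : k = i
  · subst hk; simp
  · obtain rfl : k = j := by omega
    simpa [Finsupp.single_apply, hij] using sub_eq_zero.2 hx

theorem dense_torusLeaf_inter (b : Basis (Fin 2) ℝ (Fin 2 → ℝ))
    (hb : ∀ i, Dense (b.coord i '' lattice2)) (z : Torus2) :
    Dense (torusLeaf z (b 0) ∩ torusLeaf z (b 1)) := by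
  have hsurj : Function.Surjective fun x => z + torusProj x := fun w =>
    (QuotientAddGroup.mk_surjective (w - z)).imp fun x hx => by simp [hx]
  have hcont : Continuous fun x => z + torusProj x :=
    continuous_const.add QuotientAddGroup.continuous_mk
  refine (hsurj.denseRange.dense_image hcont (b.dense_setOf_forall_repr_mem hb)).mono ?_
  rintro _ ⟨x, hx, rfl⟩
  obtain ⟨n, hn, hnx⟩ := hx 0
  obtain ⟨m, hm, hmx⟩ := hx 1
  exact ⟨add_torusProj_mem_torusLeaf b z hm zero_ne_one hmx.symm,
    add_torusProj_mem_torusLeaf b z hn one_ne_zero hnx.symm⟩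

theorem homoclinic_points_dense_general
    (A : Matrix (Fin 2) (Fin 2) ℤ) (hdet : A.det = 1)
    (l : ℝ) (hl : 1 < |l|)
    (vs vu : Fin 2 → ℝ) (hvs : vs ≠ 0) (hvu : vu ≠ 0)
    (heigs : (A.map (Int.cast : ℤ → ℝ)).mulVec vs = l⁻¹ • vs)
    (heigu : (A.map (Int.cast : ℤ → ℝ)).mulVec vu = l • vu) :
    ∀ z : Torus2,
      Dense ({w : Torus2 | ∃ s : ℝ, w = z + torusProj (s • vs)} ∩
             {w : Torus2 | ∃ s : ℝ, w = z + torusProj (s • vu)}) := by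
  intro z
  have hl0 : l ≠ 0 := by rintro rfl; simp at hl; linarith
  have hl1 : |l⁻¹| < 1 := by rw [abs_inv]; exact inv_lt_one_of_one_lt₀ hl
  have hll : l⁻¹ ≠ l := fun h => (hl1.trans hl).ne (by rw [h])
  have hA : ∀ i, toLin' (A.map (Int.cast : ℤ → ℝ)) (![vs, vu] i) = ![l⁻¹, l] i • ![vs, vu] i :=
    Fin.forall_fin_two.2 ⟨heigs, heigu⟩
  have hA' : ∀ i, toLin' (A.adjugate.map (Int.cast : ℤ → ℝ)) (![vs, vu] i) =
      ![l, l⁻¹] i • ![vs, vu] i :=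
    Fin.forall_fin_two.2
      ⟨by simpa using adjugate_map_mulVec_of_mulVec_eq_smul hdet (inv_ne_zero hl0) heigs,
        adjugate_map_mulVec_of_mulVec_eq_smul hdet hl0 heigu⟩
  have hli : LinearIndependent ℝ ![vs, vu] := by
    refine End.eigenvectors_linearIndependent' _ ![l⁻¹, l] (injective_pair_iff_ne.2 hll) _
      fun i => End.hasEigenvector_iff.2 ⟨End.mem_eigenspace_iff.2 (hA i), ?_⟩
    fin_cases i <;> simpa
  set b := basisOfLinearIndependentOfCardEqFinrank hli (by simp)
  have hb : ⇑b = ![vs, vu] := coe_basisOfLinearIndependentOfCardEqFinrank _ _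
  have hα : Dense (b.coord 0 '' lattice2) :=
    dense_image_lattice2 (b.coord_ne_zero 0) A (inv_ne_zero hl0) hl1
      (b.coord_apply_eq_mul_of_apply_eq_smul (hb ▸ hA) 0)
  have hβ : Dense (b.coord 1 '' lattice2) :=
    dense_image_lattice2 (b.coord_ne_zero 1) A.adjugate (inv_ne_zero hl0) hl1
      (b.coord_apply_eq_mul_of_apply_eq_smul (hb ▸ hA') 1)
  show Dense (torusLeaf z vs ∩ torusLeaf z vu)
  simpa [hb] using dense_torusLeaf_inter b (Fin.forall_fin_two.2 ⟨hα, hβ⟩) z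

theorem homoclinic_points_dense
    (A : Matrix (Fin 2) (Fin 2) ℤ) (hdet : A.det = 1)
    (htr : 2 < |A.trace|) (l : ℝ) (hl : 1 < |l|)
    (vs vu : Fin 2 → ℝ) (hvs : vs ≠ 0) (hvu : vu ≠ 0)
    (heigs : (A.map (Int.cast : ℤ → ℝ)).mulVec vs = l⁻¹ • vs)
    (heigu : (A.map (Int.cast : ℤ → ℝ)).mulVec vu = l • vu) :
    ∀ z : Torus2,
      Dense ({w : Torus2 | ∃ s : ℝ, w = z + torusProj (s • vs)} ∩
             {w : Torus2 | ∃ s : ℝ, w = z + torusProj (s • vu)}) :=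
  homoclinic_points_dense_general A hdet l hl vs vu hvs hvu heigs heigu
end
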